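/- arXiv:0808.1239 — 2 statements merged into one kernel-verified Lean document; each statement's English description precedes it below -/
import Mathlib

section
/- For any principal ideal domain R, letting P(R) denote the subgroup of SL₂(R[t]) of matrices whose lower-left entry is divisible by t, the natural homomorphism from the amalgamated free product SL₂(R[t]) *_{P(R)} SL₂(R[t]) to SL₂(R[t,t⁻¹]) — induced on the first free factor by the inclusion and on the second free factor by i₂, with both edge maps the inclusion P(R) ↪ SL₂(R[t]) — is an isomorphism of groups. -/
open Matrix MatrixGroups Polynomial LaurentPolynomial

namespace Paper

variable (R : Type) [CommRing R]

lemma entry00 (A B : SL(2, R)) : (↑(A * B) : Matrix (Fin 2) (Fin 2) R) 0 0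
    = A.1 0 0 * B.1 0 0 + A.1 0 1 * B.1 1 0 := by
  simp [Matrix.SpecialLinearGroup.coe_mul, Matrix.mul_apply, Fin.sum_univ_two]

lemma entry01 (A B : SL(2, R)) : (↑(A * B) : Matrix (Fin 2) (Fin 2) R) 0 1
    = A.1 0 0 * B.1 0 1 + A.1 0 1 * B.1 1 1 := by
  simp [Matrix.SpecialLinearGroup.coe_mul, Matrix.mul_apply, Fin.sum_univ_two]

lemma entry10 (A B : SL(2, R)) : (↑(A * B) : Matrix (Fin 2) (Fin 2) R) 1 0
    = A.1 1 0 * B.1 0 0 + A.1 1 1 * B.1 1 0 := by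
  simp [Matrix.SpecialLinearGroup.coe_mul, Matrix.mul_apply, Fin.sum_univ_two]

lemma entry11 (A B : SL(2, R)) : (↑(A * B) : Matrix (Fin 2) (Fin 2) R) 1 1
    = A.1 1 0 * B.1 0 1 + A.1 1 1 * B.1 1 1 := by
  simp [Matrix.SpecialLinearGroup.coe_mul, Matrix.mul_apply, Fin.sum_univ_two]

/-- The subgroup of upper triangular matrices in `SL₂(R)`. -/
def Bsub : Subgroup (Matrix.SpecialLinearGroup (Fin 2) R) where
  carrier := {A | A.1 1 0 = 0}
  one_mem' := by
    show ((1 : SL(2, R)) : Matrix (Fin 2) (Fin 2) R) 1 0 = 0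
    simp [Matrix.SpecialLinearGroup.coe_one, Matrix.one_apply]
  mul_mem' {A B} hA hB := by
    show (↑(A * B) : Matrix (Fin 2) (Fin 2) R) 1 0 = 0
    rw [entry10]
    simp only [Set.mem_setOf_eq] at hA hB
    rw [hA, hB]; ring
  inv_mem' {A} hA := by
    show (↑(A⁻¹) : Matrix (Fin 2) (Fin 2) R) 1 0 = 0
    rw [Matrix.SpecialLinearGroup.SL2_inv_expl A]
    simp only [Set.mem_setOf_eq] at hA
    simp [hA]

/-- The subgroup of matrices in `SL₂(R[t])` whose lower-left entry is divisible by `t`. -/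
def Psub : Subgroup (Matrix.SpecialLinearGroup (Fin 2) (Polynomial R)) where
  carrier := {A | (X : R[X]) ∣ A.1 1 0}
  one_mem' := by
    show (X : R[X]) ∣ ((1 : SL(2, R[X])) : Matrix (Fin 2) (Fin 2) R[X]) 1 0
    simp [Matrix.SpecialLinearGroup.coe_one, Matrix.one_apply]
  mul_mem' {A B} hA hB := by
    show (X : R[X]) ∣ (↑(A * B) : Matrix (Fin 2) (Fin 2) R[X]) 1 0
    rw [entry10]
    exact dvd_add (hA.mul_right _) (hB.mul_left _)
  inv_mem' {A} hA := by
    show (X : R[X]) ∣ (↑(A⁻¹) : Matrix (Fin 2) (Fin 2) R[X]) 1 0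
    rw [Matrix.SpecialLinearGroup.SL2_inv_expl A]
    simp only [Set.mem_setOf_eq] at hA
    simpa using hA.neg_right

/-- The elementary matrix `(1 r; 0 1)`. -/
def elUp (r : R) : SL(2, R) :=
  ⟨!![1, r; 0, 1], by simp [Matrix.det_fin_two_of]⟩

/-- The elementary matrix `(1 0; r 1)`. -/
def elLow (r : R) : SL(2, R) :=
  ⟨!![1, 0; r, 1], by simp [Matrix.det_fin_two_of]⟩

/-- The subgroup `E₂(R)` of `SL₂(R)` generated by the elementary matrices. -/
def Esub : Subgroup (Matrix.SpecialLinearGroup (Fin 2) R) :=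
  Subgroup.closure {A | (∃ r : R, A = elUp R r) ∨ (∃ r : R, A = elLow R r)}

variable {R}

lemma divX_X_mul (p : R[X]) : (X * p).divX = p := by
  ext n
  rw [Polynomial.coeff_divX, Polynomial.coeff_X_mul]

lemma X_mul_divX {p : R[X]} (h : (X : R[X]) ∣ p) : X * p.divX = p := by
  obtain ⟨c, rfl⟩ := h
  rw [divX_X_mul]

lemma X_mul_cancel {p q : R[X]} (h : X * p = X * q) : p = q := by
  ext n
  have := congrArg (fun r => Polynomial.coeff r (n + 1)) h
  simpa [Polynomial.coeff_X_mul] using this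

variable (R)

/-- The matrix underlying `conjP`. -/
noncomputable def conjMat (A : SL(2, R[X])) : Matrix (Fin 2) (Fin 2) R[X] :=
  !![A.1 0 0, X * A.1 0 1; (A.1 1 0).divX, A.1 1 1]

lemma conjMat_det {A : SL(2, R[X])} (hA : (X : R[X]) ∣ A.1 1 0) : (conjMat R A).det = 1 := by
  rw [conjMat, Matrix.det_fin_two_of]
  have h : X * (A.1 1 0).divX = A.1 1 0 := X_mul_divX hA
  have hd : A.1 0 0 * A.1 1 1 - A.1 0 1 * A.1 1 0 = 1 := by
    rw [← Matrix.det_fin_two]; exact A.2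
  calc A.1 0 0 * A.1 1 1 - X * A.1 0 1 * (A.1 1 0).divX
      = A.1 0 0 * A.1 1 1 - A.1 0 1 * (X * (A.1 1 0).divX) := by ring
    _ = 1 := by rw [h]; exact hd

lemma conjMat_mul {A B : SL(2, R[X])} (hA : (X : R[X]) ∣ A.1 1 0)
    (hB : (X : R[X]) ∣ B.1 1 0) :
    conjMat R (A * B) = conjMat R A * conjMat R B := by
  have h00 : A.1 0 0 * B.1 0 0 + A.1 0 1 * B.1 1 0
      = A.1 0 0 * B.1 0 0 + (X * A.1 0 1) * (B.1 1 0).divX := by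
    rw [show (X * A.1 0 1) * (B.1 1 0).divX = A.1 0 1 * (X * (B.1 1 0).divX) by ring,
      X_mul_divX hB]
  have h01 : X * (A.1 0 0 * B.1 0 1 + A.1 0 1 * B.1 1 1)
      = A.1 0 0 * (X * B.1 0 1) + (X * A.1 0 1) * B.1 1 1 := by ring
  have h10 : (A.1 1 0 * B.1 0 0 + A.1 1 1 * B.1 1 0).divX
      = (A.1 1 0).divX * B.1 0 0 + A.1 1 1 * (B.1 1 0).divX := by
    apply X_mul_cancel
    rw [X_mul_divX (dvd_add (hA.mul_right _) (hB.mul_left _))]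
    rw [mul_add,
      show X * ((A.1 1 0).divX * B.1 0 0) = (X * (A.1 1 0).divX) * B.1 0 0 by ring,
      X_mul_divX hA,
      show X * (A.1 1 1 * (B.1 1 0).divX) = A.1 1 1 * (X * (B.1 1 0).divX) by ring,
      X_mul_divX hB]
  have h11 : A.1 1 0 * B.1 0 1 + A.1 1 1 * B.1 1 1
      = (A.1 1 0).divX * (X * B.1 0 1) + A.1 1 1 * B.1 1 1 := by
    rw [show (A.1 1 0).divX * (X * B.1 0 1) = (X * (A.1 1 0).divX) * B.1 0 1 by ring,
      X_mul_divX hA]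
  rw [conjMat, conjMat, conjMat, entry00, entry01, entry10, entry11,
    Matrix.mul_fin_two, h10]
  rw [show (A.1 1 0 * B.1 0 1 + A.1 1 1 * B.1 1 1) = (A.1 1 0).divX * (X * B.1 0 1) + A.1 1 1 * B.1 1 1 from h11]
  rw [show (A.1 0 0 * B.1 0 0 + A.1 0 1 * B.1 1 0) = A.1 0 0 * B.1 0 0 + (X * A.1 0 1) * (B.1 1 0).divX from h00]
  rw [show X * (A.1 0 0 * B.1 0 1 + A.1 0 1 * B.1 1 1) = A.1 0 0 * (X * B.1 0 1) + (X * A.1 0 1) * B.1 1 1 from h01]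

/-- The second edge embedding `P → SL₂(R[t])`, conjugation by `diag(1,t)⁻¹` inside
`SL₂(R[t,t⁻¹])`: `(a, b; t·c, d) ↦ (a, t·b; c, d)`. -/
noncomputable def conjP : ↥(Psub R) →* SL(2, R[X]) where
  toFun A := ⟨conjMat R A.1, conjMat_det R A.2⟩
  map_one' := by
    apply Subtype.ext
    show conjMat R 1 = 1
    rw [conjMat]
    have h00 : ((1 : SL(2, R[X])) : Matrix (Fin 2) (Fin 2) R[X]) 0 0 = 1 := by
      rw [Matrix.SpecialLinearGroup.coe_one]; simp [Matrix.one_apply]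
    have h01 : ((1 : SL(2, R[X])) : Matrix (Fin 2) (Fin 2) R[X]) 0 1 = 0 := by
      rw [Matrix.SpecialLinearGroup.coe_one]; simp [Matrix.one_apply]
    have h10 : ((1 : SL(2, R[X])) : Matrix (Fin 2) (Fin 2) R[X]) 1 0 = 0 := by
      rw [Matrix.SpecialLinearGroup.coe_one]; simp [Matrix.one_apply]
    have h11 : ((1 : SL(2, R[X])) : Matrix (Fin 2) (Fin 2) R[X]) 1 1 = 1 := by
      rw [Matrix.SpecialLinearGroup.coe_one]; simp [Matrix.one_apply]
    rw [h00, h01, h10, h11, mul_zero, Polynomial.divX_zero, ← Matrix.one_fin_two]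
  map_mul' A B := by
    apply Subtype.ext
    show conjMat R (A.1 * B.1) = conjMat R A.1 * conjMat R B.1
    exact conjMat_mul R A.2 B.2

/-- The diagonal matrix `diag(1, t)` as a unit of the ring of 2×2 matrices over `R[t,t⁻¹]`. -/
noncomputable def DT : (Matrix (Fin 2) (Fin 2) (LaurentPolynomial R))ˣ where
  val := Matrix.diagonal ![1, LaurentPolynomial.T 1]
  inv := Matrix.diagonal ![1, LaurentPolynomial.T (-1)]
  val_inv := by
    rw [Matrix.diagonal_mul_diagonal]
    have : (fun i => (![1, LaurentPolynomial.T 1] : Fin 2 → LaurentPolynomial R) i *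
        ![1, LaurentPolynomial.T (-1)] i) = fun _ => (1 : LaurentPolynomial R) := by
      funext i
      fin_cases i
      · simp
      · show LaurentPolynomial.T 1 * LaurentPolynomial.T (-1) = 1
        rw [← LaurentPolynomial.T_add]; simp
    rw [this, Matrix.diagonal_one]
  inv_val := by
    rw [Matrix.diagonal_mul_diagonal]
    have : (fun i => (![1, LaurentPolynomial.T (-1)] : Fin 2 → LaurentPolynomial R) i *
        ![1, LaurentPolynomial.T 1] i) = fun _ => (1 : LaurentPolynomial R) := by
      funext i
      fin_cases i
      · simp
      · show LaurentPolynomial.T (-1) * LaurentPolynomial.T 1 = 1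
        rw [← LaurentPolynomial.T_add]; simp
    rw [this, Matrix.diagonal_one]

lemma DT_conj_det (M : Matrix (Fin 2) (Fin 2) (LaurentPolynomial R)) :
    (((DT R) : Matrix (Fin 2) (Fin 2) (LaurentPolynomial R)) * M * ((DT R)⁻¹).val).det = M.det := by
  rw [Matrix.det_mul, Matrix.det_mul]
  have h : ((DT R) : Matrix (Fin 2) (Fin 2) (LaurentPolynomial R)).det *
      ((DT R)⁻¹ : (Matrix (Fin 2) (Fin 2) (LaurentPolynomial R))ˣ).1.det = 1 := by
    rw [← Matrix.det_mul, Units.mul_inv, Matrix.det_one]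
  calc ((DT R) : Matrix (Fin 2) (Fin 2) (LaurentPolynomial R)).det * M.det * (((DT R)⁻¹).val).det
      = ((DT R) : Matrix (Fin 2) (Fin 2) (LaurentPolynomial R)).det * (((DT R)⁻¹).val).det * M.det := by ring
    _ = M.det := by rw [h, one_mul]

/-- The homomorphism `i₂ : SL₂(R[t]) → SL₂(R[t,t⁻¹])`, `A ↦ diag(1,t)·A·diag(1,t⁻¹)`. -/
noncomputable def i₂SL : SL(2, Polynomial R) →* SL(2, LaurentPolynomial R) where
  toFun A := ⟨(DT R : Matrix (Fin 2) (Fin 2) (LaurentPolynomial R)) *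
      A.1.map Polynomial.toLaurent * ↑(DT R)⁻¹, by
    rw [DT_conj_det]
    have : (A.1.map (Polynomial.toLaurent : R[X] → LaurentPolynomial R)).det
        = Polynomial.toLaurent A.1.det := by
      rw [← RingHom.mapMatrix_apply, ← RingHom.map_det]
    rw [this, A.2, _root_.map_one]⟩
  map_one' := by
    apply Subtype.ext
    show (DT R : Matrix (Fin 2) (Fin 2) (LaurentPolynomial R)) *
      ((1 : SL(2, R[X])).1.map Polynomial.toLaurent) * ((DT R)⁻¹).val = 1
    rw [Matrix.SpecialLinearGroup.coe_one]
    rw [show ((1 : Matrix (Fin 2) (Fin 2) R[X]).map (Polynomial.toLaurent : R[X] → _)) = 1 from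
      Matrix.map_one _ (map_zero _) (map_one _)]
    rw [mul_one, Units.mul_inv]
  map_mul' A B := by
    apply Subtype.ext
    show (DT R : Matrix (Fin 2) (Fin 2) (LaurentPolynomial R)) *
        ((A * B).1.map Polynomial.toLaurent) * ((DT R)⁻¹).val = _
    rw [Matrix.SpecialLinearGroup.coe_mul]
    rw [show ((A.1 * B.1).map (Polynomial.toLaurent : R[X] → _))
        = A.1.map Polynomial.toLaurent * B.1.map Polynomial.toLaurent from
      Matrix.map_mul]
    show _ = ((DT R : Matrix (Fin 2) (Fin 2) (LaurentPolynomial R)) *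
        A.1.map Polynomial.toLaurent * ((DT R)⁻¹).val) *
      ((DT R : Matrix (Fin 2) (Fin 2) (LaurentPolynomial R)) *
        B.1.map Polynomial.toLaurent * ((DT R)⁻¹).val)
    simp only [mul_assoc, Units.inv_mul_cancel_left]

end Paper
namespace Paper

variable (R : Type) [CommRing R]

lemma T_conj (f : LaurentPolynomial R) :
    LaurentPolynomial.T 1 * f * LaurentPolynomial.T (-1) = f := by
  rw [mul_assoc, LaurentPolynomial.T_mul, LaurentPolynomial.mul_T_assoc]
  simp

/-- Compatibility: `i₂ ∘ conjP` is the canonical inclusion on `P`. -/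
lemma i₂SL_conjP (A : ↥(Psub R)) :
    i₂SL R (conjP R A) = Matrix.SpecialLinearGroup.map Polynomial.toLaurent A.1 := by
  have hA : (X : R[X]) ∣ A.1.1 1 0 := A.2
  apply Subtype.ext
  show (DT R : Matrix (Fin 2) (Fin 2) (LaurentPolynomial R)) *
      (conjMat R A.1).map Polynomial.toLaurent * ((DT R)⁻¹).val
    = (Polynomial.toLaurent : R[X] →+* _).mapMatrix A.1.1
  rw [RingHom.mapMatrix_apply]
  have hD : (DT R : Matrix (Fin 2) (Fin 2) (LaurentPolynomial R))
      = Matrix.diagonal ![1, LaurentPolynomial.T 1] := rfl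
  have hD' : ((DT R)⁻¹ : (Matrix (Fin 2) (Fin 2) (LaurentPolynomial R))ˣ).val
      = Matrix.diagonal ![1, LaurentPolynomial.T (-1)] := rfl
  rw [hD, hD', ← Matrix.ext_iff]
  intro i j
  rw [Matrix.mul_diagonal, Matrix.diagonal_mul, Matrix.map_apply, Matrix.map_apply]
  fin_cases i <;> fin_cases j <;>
    simp only [conjMat, Fin.zero_eta, Fin.mk_one, Fin.isValue, id_eq,
      Matrix.cons_val', Matrix.cons_val_zero, Matrix.cons_val_one, Matrix.head_cons,
      Matrix.empty_val', Matrix.cons_val_fin_one, Matrix.head_fin_const, Matrix.of_apply]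
  · rw [one_mul, mul_one]
  · rw [one_mul, _root_.map_mul, Polynomial.toLaurent_X, mul_comm (LaurentPolynomial.T 1),
      LaurentPolynomial.mul_T_assoc]
    simp
  · rw [mul_one, ← Polynomial.toLaurent_X, ← _root_.map_mul, X_mul_divX hA]
  · exact T_conj R _

end Paper
namespace Paper

variable (R : Type) [CommRing R]

/-- The two edge embeddings of `P` into the two copies of `SL₂(R[t])`: the first is the
inclusion, the second is the inclusion conjugated by `diag(1,t)` (i.e. the identification of
`P` with a subgroup of the second vertex group of the tree of groups). -/
noncomputable def edgesP : Bool → (↥(Psub R) →* SL(2, Polynomial R))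
  | true => (Psub R).subtype
  | false => conjP R

/-- On the first free factor, the canonical inclusion `SL₂(R[t]) → SL₂(R[t,t⁻¹])`;
on the second free factor, the map `i₂`. -/
noncomputable def legsP : Bool → (SL(2, Polynomial R) →* SL(2, LaurentPolynomial R))
  | true => Matrix.SpecialLinearGroup.map Polynomial.toLaurent
  | false => i₂SL R

lemma compatP : ∀ b, (legsP R b).comp (edgesP R b)
    = (Matrix.SpecialLinearGroup.map (Polynomial.toLaurent : R[X] →+* LaurentPolynomial R)).comp
        (Psub R).subtype := by
  intro b
  cases b
  · exact MonoidHom.ext fun A => i₂SL_conjP R A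
  · rfl

/-- The natural homomorphism from the amalgamated free product
`SL₂(R[t]) *_P SL₂(R[t])` to `SL₂(R[t,t⁻¹])`. -/
noncomputable def amalgamToSL : Monoid.PushoutI (edgesP R) →* SL(2, LaurentPolynomial R) :=
  Monoid.PushoutI.lift (legsP R)
    ((Matrix.SpecialLinearGroup.map (Polynomial.toLaurent : R[X] →+* LaurentPolynomial R)).comp
      (Psub R).subtype)
    (compatP R)

end Paper

/-!
Write a matrix over `R[t,t⁻¹]` as `t ^ k • N` with `N` polynomial.

Injectivity is a ping-pong argument on the `t`-adic order. Multiplying by an element of the first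
factor outside `P(R)` keeps the order and moves its leading coefficients to the bottom row;
multiplying by `i₂ g` with `g` outside the second edge group lowers the order by one and moves them
to the top row. So the image of a nonempty reduced word has negative order, or is a single letter
outside `P(R)`, and never lies in `P(R)`.

Surjectivity is a descent on the pole order. If `M = t ^ k • N` with `k < 0`, then `det N(0) = 0`
since `det M = 1`; over a PID a constant `γ₁ ∈ SL₂(R)` kills the second row of `N(0)`, after which
a constant `γ₂` kills the first row of the next leading term, and `i₂ γ₂ · γ₁ · M` has order
`k + 1`.
-/

namespace Monoid

theorem CoprodI.Word.eq_empty_of_fstIdx_eq_none {ι : Type*} {M : ι → Type*}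
    [∀ i, Monoid (M i)] {w : Word M} (h : w.fstIdx = none) : w = empty := by
  rcases w with ⟨_ | _, _, _⟩
  · rfl
  · simp [fstIdx] at h

namespace PushoutI

open CoprodI

variable {ι : Type*} {G : ι → Type*} {H K : Type*} [∀ i, Group (G i)] [Group H] [Group K]
  {φ : ∀ i, H →* G i}

theorem reduced_cons_iff {i : ι} {g : G i} {w : Word G} (hw : w.fstIdx ≠ some i) (hg : g ≠ 1) :
    Reduced φ (Word.cons g w hw hg) ↔ g ∉ (φ i).range ∧ Reduced φ w := by
  simp [Reduced, Word.cons]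

theorem NormalWord.reduced {d : NormalWord.Transversal φ} (w : NormalWord d) :
    Reduced φ w.toWord := by
  rintro ⟨i, g⟩ hg hgφ
  have h1 : ((d.compl i).equiv g).snd = (1 : G i) :=
    congrArg Subtype.val ((d.compl i).equiv_snd_eq_one_of_mem_of_one_mem (d.one_mem i) hgφ)
  rw [(d.compl i).equiv_snd_eq_self_of_mem_of_one_mem (one_mem _) (w.normalized i _ hg)] at h1
  exact w.ne_one _ hg h1

theorem injective_of_reduced (hφ : ∀ i, Function.Injective (φ i)) (f : PushoutI φ →* K)
    (hbase : Function.Injective (f.comp (base φ)))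
    (hred : ∀ w : Word G, Reduced φ w → w ≠ .empty →
      f (ofCoprodI w.prod) ∉ (f.comp (base φ)).range) :
    Function.Injective f := by
  classical
  obtain ⟨d⟩ := NormalWord.transversal_nonempty φ hφ
  refine (injective_iff_map_eq_one f).mpr fun x hx => ?_
  obtain ⟨w, rfl⟩ := (NormalWord.equiv (d := d)).symm.surjective x
  change f (base φ w.head * ofCoprodI w.toWord.prod) = 1 at hx
  rw [map_mul, mul_eq_one_iff_inv_eq, ← map_inv, ← map_inv] at hx
  have hw : w.toWord = .empty := by
    by_contra hne
    exact hred _ w.reduced hne ⟨_, hx⟩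
  have hhead : w.head = 1 := by
    rw [hw, Word.prod_empty, map_one, map_one] at hx
    exact inv_eq_one.mp ((injective_iff_map_eq_one _).mp hbase _ hx)
  change base φ w.head * ofCoprodI w.toWord.prod = 1
  rw [hw, hhead, Word.prod_empty, map_one, map_one, one_mul]

end PushoutI

end Monoid

theorem Matrix.SpecialLinearGroup.map_injective {n A B : Type*} [Fintype n] [DecidableEq n]
    [CommRing A] [CommRing B] {f : A →+* B} (hf : Function.Injective f) :
    Function.Injective (SpecialLinearGroup.map (n := n) f) :=
  fun _ _ h => Subtype.ext (Matrix.map_injective hf (congrArg Subtype.val h))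

theorem Matrix.exists_eq_diagonal_update_mul_of_dvd {α n : Type*} [CommSemiring α] [Fintype n]
    [DecidableEq n] {A : Matrix n n α} {i : n} {a : α} (h : ∀ j, a ∣ A i j) :
    ∃ A' : Matrix n n α, A = diagonal (Function.update 1 i a) * A' := by
  choose c hc using h
  refine ⟨A.updateRow i c, Matrix.ext fun k j => ?_⟩
  rcases eq_or_ne k i with rfl | hk
  · simp [hc j]
  · simp [hk]

namespace Paper

open Monoid Filter

section LaurentMatrices

variable {R : Type*} [CommRing R] {n : Type*}

theorem T_smul_mul_T_smul [Fintype n] (k l : ℤ) (A B : Matrix n n R[T;T⁻¹]) :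
    ((T k : R[T;T⁻¹]) • A) * ((T l : R[T;T⁻¹]) • B) = (T (k + l) : R[T;T⁻¹]) • (A * B) := by
  rw [smul_mul_smul_comm, ← T_add]

theorem map_toLaurent_X_pow_smul (m : ℕ) (A : Matrix n n R[X]) :
    ((X : R[X]) ^ m • A).map toLaurent = (T m : R[T;T⁻¹]) • A.map toLaurent := by
  rw [Matrix.map_smul' _ _ _ (map_mul _), toLaurent_X_pow]

theorem map_constantCoeff_eq_zero_of_map_toLaurent_eq {A N : Matrix n n R[X]} {k : ℤ}
    (hk : k < 0) (h : A.map toLaurent = (T k : R[T;T⁻¹]) • N.map toLaurent) :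
    N.map constantCoeff = 0 := by
  obtain ⟨m, hm, rfl⟩ : ∃ m : ℕ, 0 < m ∧ k = -m := ⟨(-k).toNat, by omega, by omega⟩
  have hN : (X : R[X]) ^ m • A = N := by
    refine Matrix.map_injective toLaurent_injective ?_
    dsimp only
    rw [map_toLaurent_X_pow_smul, h, smul_smul, ← T_add, add_neg_cancel, T_zero, one_smul]
  rw [← hN, Matrix.map_smul' _ _ _ (map_mul _), map_pow, constantCoeff_apply, coeff_X_zero,
    zero_pow hm.ne', zero_smul]

theorem det_T_smul_map_toLaurent (k : ℤ) (N : Matrix (Fin 2) (Fin 2) R[X]) :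
    ((T k : R[T;T⁻¹]) • N.map toLaurent).det = T (2 * k) * toLaurent N.det := by
  rw [det_smul, Fintype.card_fin, T_pow, RingHom.map_det, RingHom.mapMatrix_apply]
  norm_num

theorem coeff_zero_eq_zero_of_T_mul_toLaurent_eq_one {p : R[X]} {k : ℤ} (hk : k < 0)
    (h : (T k : R[T;T⁻¹]) * toLaurent p = 1) : p.coeff 0 = 0 := by
  obtain ⟨m, hm, rfl⟩ : ∃ m : ℕ, 0 < m ∧ k = -m := ⟨(-k).toNat, by omega, by omega⟩
  have hp : p = X ^ m := by
    refine toLaurent_injective ?_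
    rw [toLaurent_X_pow, ← one_mul (toLaurent p), ← T_zero, ← add_neg_cancel (m : ℤ), T_add,
      mul_assoc, h, mul_one]
  rw [hp, coeff_X_pow, if_neg hm.ne]

theorem exists_eq_T_smul_map_toLaurent [Finite n] (M : Matrix n n R[T;T⁻¹]) :
    ∃ (m : ℕ) (N : Matrix n n R[X]), M = (T (-m) : R[T;T⁻¹]) • N.map toLaurent := by
  have hentry : ∀ i j, ∀ᶠ m : ℕ in atTop, ∃ p : R[X], toLaurent p = M i j * T m := by
    intro i j
    obtain ⟨m₀, p, hp⟩ := exists_T_pow (M i j)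
    refine eventually_atTop.mpr ⟨m₀, fun m hm => ⟨p * X ^ (m - m₀), ?_⟩⟩
    rw [map_mul, hp, toLaurent_X_pow, mul_assoc, ← T_add]
    congr 2
    omega
  obtain ⟨m, hm⟩ := (eventually_all.mpr fun i => eventually_all.mpr (hentry i)).exists
  choose N hN using hm
  refine ⟨m, Matrix.of N, Matrix.ext fun i j => ?_⟩
  rw [Matrix.smul_apply, map_apply, of_apply, hN, smul_eq_mul, mul_left_comm, ← T_add,
    neg_add_cancel, T_zero, mul_one]

theorem diagonal_X_one_mul_diagonal_one_X :
    (diagonal ![X, 1] * diagonal ![1, X] : Matrix (Fin 2) (Fin 2) R[X]) = (X : R[X]) • 1 := by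
  ext i j
  fin_cases i <;> fin_cases j <;> simp

theorem diagonal_one_X_mul_mul_diagonal_X_one_mul {γ N₁ N₂ : Matrix (Fin 2) (Fin 2) R[X]}
    (h : γ * N₁ = diagonal ![X, 1] * N₂) :
    diagonal ![1, X] * γ * diagonal ![X, 1] * (diagonal ![1, X] * N₁) = (X : R[X]) ^ 2 • N₂ :=
  calc _ = diagonal ![1, X] * γ * (diagonal ![X, 1] * diagonal ![1, X]) * N₁ := by
        simp only [mul_assoc]
    _ = (X : R[X]) • (diagonal ![1, X] * (γ * N₁)) := by
        rw [diagonal_X_one_mul_diagonal_one_X, mul_smul_one, smul_mul, mul_assoc]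
    _ = (X : R[X]) • ((diagonal ![1, X] * diagonal ![X, 1]) * N₂) := by
        rw [h, mul_assoc]
    _ = (X : R[X]) ^ 2 • N₂ := by
        rw [(commute_diagonal _ _).eq, diagonal_X_one_mul_diagonal_one_X, smul_one_mul, smul_smul,
          sq]

end LaurentMatrices

section PID

theorem exists_SL2_row_eq_of_isCoprime {R : Type*} [CommRing R] {x y : R} (h : IsCoprime x y) (i : Fin 2) :
    ∃ γ : SL(2, R), (γ : Matrix (Fin 2) (Fin 2) R) i = ![x, y] := by
  obtain ⟨a, b, hab⟩ := h
  fin_cases i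
  · exact ⟨⟨!![x, y; -b, a], by rw [det_fin_two_of]; linear_combination hab⟩, rfl⟩
  · exact ⟨⟨!![b, -a; x, y], by rw [det_fin_two_of]; linear_combination hab⟩, rfl⟩

variable {R : Type*} [CommRing R] [IsDomain R] [IsPrincipalIdealRing R]

theorem exists_isCoprime_vecMul_eq_zero {L : Matrix (Fin 2) (Fin 2) R} (hL : L.det = 0) :
    ∃ x y : R, IsCoprime x y ∧ ![x, y] ᵥ* L = 0 := by
  obtain ⟨v, hv, hvL⟩ := Matrix.exists_vecMul_eq_zero_iff.mpr hL
  obtain ⟨x, hx⟩ := IsBezout.gcd_dvd_left (v 0) (v 1)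
  obtain ⟨y, hy⟩ := IsBezout.gcd_dvd_right (v 0) (v 1)
  obtain ⟨a, b, hab⟩ := IsBezout.gcd_eq_sum (v 0) (v 1)
  set d := IsBezout.gcd (v 0) (v 1)
  have hd : d ≠ 0 := fun hd => hv (by ext i; fin_cases i <;> simp [hx, hy, hd])
  refine ⟨x, y, ⟨a, b, mul_left_cancel₀ hd ?_⟩, ?_⟩
  · rw [hx, hy] at hab
    linear_combination hab
  · have hv' : v = d • ![x, y] := by ext i; fin_cases i <;> simp [hx, hy]
    rw [hv', smul_vecMul] at hvL
    exact (smul_eq_zero.mp hvL).resolve_left hd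

theorem exists_SL2_mul_row_eq_zero {L : Matrix (Fin 2) (Fin 2) R} (hL : L.det = 0) (i : Fin 2) :
    ∃ γ : SL(2, R), ((γ : Matrix (Fin 2) (Fin 2) R) * L) i = 0 := by
  obtain ⟨x, y, hxy, hL0⟩ := exists_isCoprime_vecMul_eq_zero hL
  obtain ⟨γ, hγ⟩ := exists_SL2_row_eq_of_isCoprime hxy i
  exact ⟨γ, by rw [mul_apply_eq_vecMul, hγ, hL0]⟩

theorem exists_SL2_mul_eq_diagonal_update_mul {N : Matrix (Fin 2) (Fin 2) R[X]}
    (hN : N.det.coeff 0 = 0) (i : Fin 2) :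
    ∃ γ : SL(2, R[X]), ∃ N' : Matrix (Fin 2) (Fin 2) R[X],
      (γ : Matrix (Fin 2) (Fin 2) R[X]) * N = diagonal (Function.update 1 i X) * N' := by
  have hL : (N.map constantCoeff).det = 0 := by
    rw [← RingHom.mapMatrix_apply, ← RingHom.map_det, constantCoeff_apply, hN]
  obtain ⟨γ, hγ⟩ := exists_SL2_mul_row_eq_zero hL i
  refine ⟨SpecialLinearGroup.map Polynomial.C γ, exists_eq_diagonal_update_mul_of_dvd fun j => ?_⟩
  have hmap : ((SpecialLinearGroup.map Polynomial.C γ : Matrix (Fin 2) (Fin 2) R[X]) * N).map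
      constantCoeff = (γ : Matrix (Fin 2) (Fin 2) R) * N.map constantCoeff := by
    rw [Matrix.map_mul]
    congr
    ext
    simp
  rw [X_dvd_iff, ← constantCoeff_apply]
  exact (congrFun₂ hmap i j).trans (congrFun hγ j)

end PID

variable {R : Type} [CommRing R]

theorem coe_i₂SL (g : SL(2, R[X])) :
    (i₂SL R g : Matrix (Fin 2) (Fin 2) R[T;T⁻¹]) = (T (-1) : R[T;T⁻¹]) •
      (diagonal ![1, X] * (g : Matrix (Fin 2) (Fin 2) R[X]) * diagonal ![X, 1]).map toLaurent := by
  change (DT R : Matrix (Fin 2) (Fin 2) R[T;T⁻¹]) * (g : Matrix (Fin 2) (Fin 2) R[X]).map toLaurent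
    * ((DT R)⁻¹ : (Matrix (Fin 2) (Fin 2) R[T;T⁻¹])ˣ) = _
  ext i j
  fin_cases i <;> fin_cases j <;> simp [DT, Matrix.mul_apply, Fin.sum_univ_two]

theorem legsP_mem_range (i : Bool) (g : SL(2, R[X])) : legsP R i g ∈ (amalgamToSL R).range :=
  ⟨PushoutI.of i g, by rw [amalgamToSL, PushoutI.lift_of]⟩

theorem amalgamToSL_ofCoprodI_of (i : Bool) (g : SL(2, R[X])) :
    amalgamToSL R (PushoutI.ofCoprodI (CoprodI.of (i := i) g)) = legsP R i g := by
  rw [PushoutI.ofCoprodI_of, amalgamToSL, PushoutI.lift_of]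

theorem conjP_injective : Function.Injective (conjP R) := fun a b h =>
  Subtype.ext <| SpecialLinearGroup.map_injective toLaurent_injective <| by
    rw [← i₂SL_conjP, ← i₂SL_conjP, h]

theorem edgesP_injective : ∀ i, Function.Injective (edgesP R i)
  | true => Subgroup.subtype_injective _
  | false => conjP_injective

theorem mem_range_conjP_of_X_dvd {g : SL(2, R[X])} (h : X ∣ g 0 1) : g ∈ (conjP R).range := by
  have hdet : (!![g 0 0, (g 0 1).divX; X * g 1 0, g 1 1] : Matrix (Fin 2) (Fin 2) R[X]).det = 1 := by
    have hg := g.det_coe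
    rw [det_fin_two, ← X_mul_divX h] at hg
    rw [det_fin_two_of]
    linear_combination hg
  refine ⟨⟨⟨_, hdet⟩, dvd_mul_right X _⟩, Subtype.ext (Matrix.ext fun i j => ?_)⟩
  change conjMat R ⟨_, hdet⟩ i j = g i j
  fin_cases i <;> fin_cases j <;> simp [conjMat, X_mul_divX h, divX_X_mul]

theorem coeff_zero_ne_zero_of_notMem_range_edgesP_true {g : SL(2, R[X])}
    (hg : g ∉ (edgesP R true).range) : (g 1 0).coeff 0 ≠ 0 :=
  fun h0 => hg ⟨⟨g, X_dvd_iff.mpr h0⟩, rfl⟩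

theorem coeff_zero_ne_zero_of_notMem_range_edgesP_false {g : SL(2, R[X])}
    (hg : g ∉ (edgesP R false).range) : (g 0 1).coeff 0 ≠ 0 :=
  fun h0 => hg (mem_range_conjP_of_X_dvd (X_dvd_iff.mpr h0))

/-- `M` has `t`-adic order exactly `k`, attained in the second row. -/
def BottomLeads (k : ℤ) (M : SL(2, R[T;T⁻¹])) : Prop :=
  ∃ N : Matrix (Fin 2) (Fin 2) R[X],
    (M : Matrix (Fin 2) (Fin 2) R[T;T⁻¹]) = (T k : R[T;T⁻¹]) • N.map toLaurent ∧
      N.map constantCoeff 1 ≠ 0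

/-- `M` has `t`-adic order exactly `k`, attained in the first row, and its second row has order
at least `k + 1`. -/
def TopLeads (k : ℤ) (M : SL(2, R[T;T⁻¹])) : Prop :=
  ∃ N : Matrix (Fin 2) (Fin 2) R[X],
    (M : Matrix (Fin 2) (Fin 2) R[T;T⁻¹]) =
        (T k : R[T;T⁻¹]) • (diagonal ![1, X] * N).map toLaurent ∧
      N.map constantCoeff 0 ≠ 0

theorem TopLeads.bottomLeads_map_mul [NoZeroDivisors R] {k : ℤ} {M : SL(2, R[T;T⁻¹])}
    (hM : TopLeads k M) {g : SL(2, R[X])} (hg : (g 1 0).coeff 0 ≠ 0) :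
    BottomLeads k (SpecialLinearGroup.map toLaurent g * M) := by
  obtain ⟨N, hMN, hN⟩ := hM
  refine ⟨(g : Matrix (Fin 2) (Fin 2) R[X]) * diagonal ![1, X] * N, ?_, ?_⟩
  · change _ * _ = _
    rw [hMN, Matrix.mul_smul, mul_assoc, Matrix.map_mul (L := (g : Matrix (Fin 2) (Fin 2) R[X]))]
    rfl
  · have hrow : (((g : Matrix (Fin 2) (Fin 2) R[X]) * diagonal ![1, X] * N).map constantCoeff) 1
        = (g 1 0).coeff 0 • N.map constantCoeff 0 := by
      ext j
      simp [Matrix.mul_apply, Fin.sum_univ_two]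
    rw [hrow]
    exact smul_ne_zero hg hN

theorem BottomLeads.topLeads_i₂SL_mul [NoZeroDivisors R] {k : ℤ} {M : SL(2, R[T;T⁻¹])}
    (hM : BottomLeads k M) {g : SL(2, R[X])} (hg : (g 0 1).coeff 0 ≠ 0) :
    TopLeads (k - 1) (i₂SL R g * M) := by
  obtain ⟨N, hMN, hN⟩ := hM
  refine ⟨(g : Matrix (Fin 2) (Fin 2) R[X]) * diagonal ![X, 1] * N, ?_, ?_⟩
  · change _ * _ = _
    rw [hMN, coe_i₂SL, T_smul_mul_T_smul, ← Matrix.map_mul]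
    simp only [mul_assoc, neg_add_eq_sub]
  · have hrow : (((g : Matrix (Fin 2) (Fin 2) R[X]) * diagonal ![X, 1] * N).map constantCoeff) 0
        = (g 0 1).coeff 0 • N.map constantCoeff 1 := by
      ext j
      simp [Matrix.mul_apply, Fin.sum_univ_two]
    rw [hrow]
    exact smul_ne_zero hg hN

theorem BottomLeads.nonneg_of_map {k : ℤ} {A : SL(2, R[X])}
    (h : BottomLeads k (SpecialLinearGroup.map toLaurent A)) : 0 ≤ k := by
  obtain ⟨N, hN, hrow⟩ := h
  by_contra hk
  exact hrow (by rw [map_constantCoeff_eq_zero_of_map_toLaurent_eq (not_le.mp hk) hN]; rfl)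

theorem TopLeads.nonneg_of_map {k : ℤ} {A : SL(2, R[X])}
    (h : TopLeads k (SpecialLinearGroup.map toLaurent A)) : 0 ≤ k := by
  obtain ⟨N, hN, hrow⟩ := h
  by_contra hk
  have h0 := map_constantCoeff_eq_zero_of_map_toLaurent_eq (not_le.mp hk) hN
  exact hrow (funext fun j => by simpa [Matrix.mul_apply, Fin.sum_univ_two] using congrFun₂ h0 0 j)

theorem exists_leads_of_reduced [IsDomain R] (w : CoprodI.Word fun _ : Bool => SL(2, R[X]))
    (hw : PushoutI.Reduced (edgesP R) w) :
    (w.fstIdx ≠ some false →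
      ∃ k ≤ 0, BottomLeads k (amalgamToSL R (PushoutI.ofCoprodI w.prod))) ∧
    (w.fstIdx = some false →
      ∃ k < 0, TopLeads k (amalgamToSL R (PushoutI.ofCoprodI w.prod))) := by
  induction w using CoprodI.Word.consRecOn with
  | empty =>
    refine ⟨fun _ => ⟨0, le_rfl, 1, ?_, ?_⟩, fun h => absurd h (by simp [CoprodI.Word.fstIdx])⟩
    · simp [CoprodI.Word.prod_empty]
    · exact fun h => one_ne_zero (α := R) (by simpa using congrFun h 1)
  | cons i g w hw1 hg1 ih =>
    obtain ⟨hgr, hwr⟩ := (PushoutI.reduced_cons_iff hw1 hg1).mp hw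
    rw [CoprodI.Word.fstIdx_cons, CoprodI.Word.prod_cons, map_mul, map_mul,
      amalgamToSL_ofCoprodI_of]
    cases i with
    | false =>
      refine ⟨fun h => absurd rfl h, fun _ => ?_⟩
      obtain ⟨k, hk, hW⟩ := (ih hwr).1 hw1
      exact ⟨k - 1, by omega,
        hW.topLeads_i₂SL_mul (coeff_zero_ne_zero_of_notMem_range_edgesP_false hgr)⟩
    | true =>
      refine ⟨fun _ => ?_, fun h => absurd h (by simp)⟩
      have hg := coeff_zero_ne_zero_of_notMem_range_edgesP_true hgr
      rcases hw' : w.fstIdx with _ | _ | _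
      · rw [CoprodI.Word.eq_empty_of_fstIdx_eq_none hw', CoprodI.Word.prod_empty, map_one,
          map_one, mul_one]
        refine ⟨0, le_rfl, g, ?_, fun h => hg (by simpa using congrFun h 0)⟩
        rw [T_zero, one_smul]
        rfl
      · obtain ⟨k, hk, hW⟩ := (ih hwr).2 hw'
        exact ⟨k, hk.le, hW.bottomLeads_map_mul hg⟩
      · exact absurd hw' hw1

theorem amalgamToSL_ofCoprodI_prod_notMem_range [IsDomain R]
    {w : CoprodI.Word fun _ : Bool => SL(2, R[X])} (hw : PushoutI.Reduced (edgesP R) w)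
    (hne : w ≠ .empty) :
    amalgamToSL R (PushoutI.ofCoprodI w.prod) ∉
      ((amalgamToSL R).comp (PushoutI.base (edgesP R))).range := by
  rintro ⟨h, hh⟩
  replace hh : amalgamToSL R (PushoutI.ofCoprodI w.prod) =
      SpecialLinearGroup.map toLaurent h.1 := by
    rw [← hh, MonoidHom.comp_apply, amalgamToSL, PushoutI.lift_base]
    rfl
  induction w using CoprodI.Word.consRecOn with
  | empty => exact hne rfl
  | cons i g w hw1 hg1 _ =>
    obtain ⟨hgr, hwr⟩ := (PushoutI.reduced_cons_iff hw1 hg1).mp hw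
    cases i with
    | false =>
      obtain ⟨k, hk, hW⟩ := (exists_leads_of_reduced _ hw).2 (CoprodI.Word.fstIdx_cons _ _ _ _)
      rw [hh] at hW
      exact hW.nonneg_of_map.not_gt hk
    | true =>
      rw [CoprodI.Word.prod_cons, map_mul, map_mul, amalgamToSL_ofCoprodI_of] at hh
      rcases hw' : w.fstIdx with _ | _ | _
      · rw [CoprodI.Word.eq_empty_of_fstIdx_eq_none hw', CoprodI.Word.prod_empty, map_one,
          map_one, mul_one] at hh
        exact hgr ⟨h, SpecialLinearGroup.map_injective toLaurent_injective hh.symm⟩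
      · obtain ⟨k, hk, hW⟩ := (exists_leads_of_reduced w hwr).2 hw'
        have hgW := hW.bottomLeads_map_mul (coeff_zero_ne_zero_of_notMem_range_edgesP_true hgr)
        rw [← legsP, hh] at hgW
        exact hgW.nonneg_of_map.not_gt hk
      · exact absurd hw' hw1

theorem amalgamToSL_injective [IsDomain R] : Function.Injective (amalgamToSL R) := by
  refine PushoutI.injective_of_reduced edgesP_injective _ (fun a b hab => ?_)
    fun _ => amalgamToSL_ofCoprodI_prod_notMem_range
  simp only [MonoidHom.comp_apply, amalgamToSL, PushoutI.lift_base] at hab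
  exact Subtype.ext (SpecialLinearGroup.map_injective toLaurent_injective hab)

section Descent

variable [IsDomain R] [IsPrincipalIdealRing R]

theorem exists_map_mul_eq_T_smul_diagonal_one_X_mul {M : SL(2, R[T;T⁻¹])} {k : ℤ} (hk : k < 0)
    {N : Matrix (Fin 2) (Fin 2) R[X]}
    (hM : (M : Matrix (Fin 2) (Fin 2) R[T;T⁻¹]) = (T k : R[T;T⁻¹]) • N.map toLaurent) :
    ∃ γ : SL(2, R[X]), ∃ N₁ : Matrix (Fin 2) (Fin 2) R[X],
      ((SpecialLinearGroup.map toLaurent γ * M : SL(2, R[T;T⁻¹])) :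
        Matrix (Fin 2) (Fin 2) R[T;T⁻¹]) =
          (T k : R[T;T⁻¹]) • (diagonal ![1, X] * N₁).map toLaurent ∧ N₁.det.coeff 0 = 0 := by
  have hN : N.det.coeff 0 = 0 :=
    coeff_zero_eq_zero_of_T_mul_toLaurent_eq_one (k := 2 * k) (by omega)
      (by rw [← det_T_smul_map_toLaurent, ← hM, M.det_coe])
  obtain ⟨γ, N₁, hγ⟩ := exists_SL2_mul_eq_diagonal_update_mul hN 1
  have hD : Function.update (1 : Fin 2 → R[X]) 1 X = ![1, X] := by ext j; fin_cases j <;> simp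
  rw [hD] at hγ
  have hγM : ((SpecialLinearGroup.map toLaurent γ * M : SL(2, R[T;T⁻¹])) :
      Matrix (Fin 2) (Fin 2) R[T;T⁻¹]) =
        (T k : R[T;T⁻¹]) • (diagonal ![1, X] * N₁).map toLaurent := by
    change _ * _ = _
    rw [hM, Matrix.mul_smul, ← hγ, Matrix.map_mul]
    rfl
  refine ⟨γ, N₁, hγM, coeff_zero_eq_zero_of_T_mul_toLaurent_eq_one (k := 2 * k + 1) (by omega) ?_⟩
  rw [← (SpecialLinearGroup.map toLaurent γ * M).det_coe, hγM, det_T_smul_map_toLaurent, det_mul,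
    det_diagonal, Fin.prod_univ_two]
  simp only [cons_val_zero, cons_val_one, one_mul, map_mul, toLaurent_X, ← mul_assoc, ← T_add]

theorem exists_mul_eq_T_smul_map_toLaurent {M : SL(2, R[T;T⁻¹])} {k : ℤ} (hk : k < 0)
    {N : Matrix (Fin 2) (Fin 2) R[X]}
    (hM : (M : Matrix (Fin 2) (Fin 2) R[T;T⁻¹]) = (T k : R[T;T⁻¹]) • N.map toLaurent) :
    ∃ γ ∈ (amalgamToSL R).range, ∃ N' : Matrix (Fin 2) (Fin 2) R[X],
      ((γ * M : SL(2, R[T;T⁻¹])) : Matrix (Fin 2) (Fin 2) R[T;T⁻¹]) =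
        (T (k + 1) : R[T;T⁻¹]) • N'.map toLaurent := by
  obtain ⟨γ₁, N₁, hM₁, hN₁⟩ := exists_map_mul_eq_T_smul_diagonal_one_X_mul hk hM
  obtain ⟨γ₂, N₂, h₂⟩ := exists_SL2_mul_eq_diagonal_update_mul hN₁ 0
  have hD : Function.update (1 : Fin 2 → R[X]) 0 X = ![X, 1] := by ext j; fin_cases j <;> simp
  rw [hD] at h₂
  refine ⟨i₂SL R γ₂ * SpecialLinearGroup.map toLaurent γ₁,
    mul_mem (legsP_mem_range false γ₂) (legsP_mem_range true γ₁), N₂, ?_⟩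
  rw [mul_assoc]
  change _ * _ = _
  rw [hM₁, coe_i₂SL, T_smul_mul_T_smul, ← Matrix.map_mul,
    diagonal_one_X_mul_mul_diagonal_X_one_mul h₂, map_toLaurent_X_pow_smul, smul_smul, ← T_add]
  congr 2
  push_cast
  ring

theorem mem_range_amalgamToSL_of_eq_T_smul (n : ℕ) {M : SL(2, R[T;T⁻¹])}
    {N : Matrix (Fin 2) (Fin 2) R[X]}
    (hM : (M : Matrix (Fin 2) (Fin 2) R[T;T⁻¹]) = (T (-n) : R[T;T⁻¹]) • N.map toLaurent) :
    M ∈ (amalgamToSL R).range := by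
  induction n generalizing M N with
  | zero =>
    rw [Nat.cast_zero, neg_zero, T_zero, one_smul] at hM
    have hN : N.det = 1 := toLaurent_injective <| by
      rw [RingHom.map_det, RingHom.mapMatrix_apply, ← hM, M.det_coe, map_one]
    convert legsP_mem_range true ⟨N, hN⟩
    exact Subtype.ext hM
  | succ n ih =>
    obtain ⟨γ, hγ, N', hγM⟩ := exists_mul_eq_T_smul_map_toLaurent (by omega) hM
    rw [Nat.cast_succ, neg_add, neg_add_cancel_right] at hγM
    simpa using mul_mem (inv_mem hγ) (ih hγM)

theorem amalgamToSL_surjective : Function.Surjective (amalgamToSL R) := fun M => by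
  obtain ⟨n, N, hM⟩ := exists_eq_T_smul_map_toLaurent (M : Matrix (Fin 2) (Fin 2) R[T;T⁻¹])
  exact mem_range_amalgamToSL_of_eq_T_smul n hM

end Descent

end Paper

open Paper in
/-- For any principal ideal domain `R`, `SL₂(R[t,t⁻¹])` is the amalgamated free product
`SL₂(R[t]) *_{P(R)} SL₂(R[t])`. -/
theorem amalgam_SL2_Laurent_pid (R : Type) [CommRing R] [IsDomain R]
    [IsPrincipalIdealRing R] :
    Function.Bijective (amalgamToSL R) :=
  ⟨amalgamToSL_injective, amalgamToSL_surjective⟩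
end

section
/- Let K(𝔽₂) denote the subgroup of SL₂(𝔽₂[t]) of matrices congruent to the identity modulo t, let C denote the subgroup of matrices of the form (1, t·p(t); 0, 1) with p ∈ 𝔽₂[t], and set m(0) = (1 0; 0 1), m(1) = (1 0; 1 1), m(∞) = (0 1; 1 0). Then the natural homomorphism from the free product of the three subgroups m(0)·C·m(0)⁻¹, m(1)·C·m(1)⁻¹, m(∞)·C·m(∞)⁻¹ (induced by their inclusions into K(𝔽₂)) to K(𝔽₂) is an isomorphism of groups. -/
open Matrix MatrixGroups Polynomial LaurentPolynomial

namespace Paper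

variable (R : Type) [CommRing R]

def wSL : SL(2, R) := ⟨!![0, 1; -1, 0], by simp [Matrix.det_fin_two_of]⟩

/-- `-1` in `SL₂`. -/
def negI : SL(2, R) := ⟨-1, by simp [Matrix.det_fin_two]⟩

variable {R}

lemma elUp_mul (r s : R) : elUp R r * elUp R s = elUp R (r + s) := by
  apply Subtype.ext
  show (elUp R r).1 * (elUp R s).1 = _
  simp [elUp, Matrix.mul_fin_two]
  ring_nf

lemma elUp_mem (r : R) : elUp R r ∈ Esub R := Subgroup.subset_closure (Or.inl ⟨r, rfl⟩)
lemma elLow_mem (r : R) : elLow R r ∈ Esub R := Subgroup.subset_closure (Or.inr ⟨r, rfl⟩)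

lemma w_eq : elUp R 1 * elLow R (-1) * elUp R 1 = wSL R := by
  apply Subtype.ext
  show (elUp R 1).1 * (elLow R (-1)).1 * (elUp R 1).1 = _
  simp [elUp, elLow, wSL, Matrix.mul_fin_two]

lemma negI_eq : wSL R * wSL R = negI R := by
  apply Subtype.ext
  show (!![0, 1; -1, 0] : Matrix (Fin 2) (Fin 2) R) * !![0, 1; -1, 0] = (-1 : Matrix (Fin 2) (Fin 2) R)
  rw [Matrix.mul_fin_two]
  ext i j
  fin_cases i <;> fin_cases j <;> simp [Matrix.one_apply]

lemma wSL_mem : wSL R ∈ Esub R := by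
  rw [← w_eq]
  exact Subgroup.mul_mem _ (Subgroup.mul_mem _ (elUp_mem 1) (elLow_mem (-1))) (elUp_mem 1)

lemma negI_mem : (negI R : SL(2,R)) ∈ Esub R := by
  rw [← negI_eq]; exact Subgroup.mul_mem _ wSL_mem wSL_mem

end Paper
namespace Paper

lemma natAbs_emod_lt {a c : ℤ} (h : c ≠ 0) : (a % c).natAbs < c.natAbs := by
  have h1 : 0 ≤ a % c := Int.emod_nonneg a h
  have h2 : a % |c| < |c| := Int.emod_lt_of_pos a (abs_pos.mpr h)
  rw [Int.emod_abs] at h2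
  have : |c| = c.natAbs := Int.abs_eq_natAbs c
  omega

/-- `SL₂(ℤ)` is generated by the elementary matrices. -/
theorem SL2Z_mem_Esub (A : SL(2, ℤ)) : A ∈ Esub ℤ := by
  suffices H : ∀ n : ℕ, ∀ A : SL(2, ℤ), (A.1 1 0).natAbs = n → A ∈ Esub ℤ from H _ A rfl
  intro n
  induction n using Nat.strong_induction_on with
  | _ n ih =>
    intro A
    induction A using Matrix.SpecialLinearGroup.fin_two_induction with
    | _ a b c d hdet =>
      intro hc
      have hc' : c.natAbs = n := by simpa using hc
      by_cases h0 : c = 0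
      · subst h0
        have had : a * d = 1 := by linarith [hdet]
        rcases Int.mul_eq_one_iff_eq_one_or_neg_one.mp had with ⟨ha, hd⟩ | ⟨ha, hd⟩
        · subst ha; subst hd
          have : (⟨!![1, b; 0, 1], by rwa [Matrix.det_fin_two_of]⟩ : SL(2, ℤ)) = elUp ℤ b :=
            Subtype.ext rfl
          rw [this]
          exact elUp_mem b
        · subst ha; subst hd
          have : (⟨!![-1, b; 0, -1], by rwa [Matrix.det_fin_two_of]⟩ : SL(2, ℤ))
              = negI ℤ * elUp ℤ (-b) := by
            apply Subtype.ext
            show !![(-1 : ℤ), b; 0, -1] = (negI ℤ).1 * (elUp ℤ (-b)).1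
            show !![(-1 : ℤ), b; 0, -1] = (-1 : Matrix (Fin 2) (Fin 2) ℤ) * !![1, -b; 0, 1]
            rw [neg_one_mul]
            ext i j
            fin_cases i <;> fin_cases j <;> simp
          rw [this]
          exact Subgroup.mul_mem _ negI_mem (elUp_mem (-b))
      · -- inductive step
        set A' : SL(2, ℤ) := ⟨!![a, b; c, d], by rwa [Matrix.det_fin_two_of]⟩ with hA'
        set N : SL(2, ℤ) := wSL ℤ * elUp ℤ (-(a / c)) with hN
        have hNcoe : (N : Matrix (Fin 2) (Fin 2) ℤ) = !![0, 1; -1, a / c] := by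
          show (!![0, 1; -1, 0] : Matrix (Fin 2) (Fin 2) ℤ) * !![1, -(a / c); 0, 1] = _
          rw [Matrix.mul_fin_two]
          norm_num
        have hentry : ((N * A').1) 1 0 = -(a % c) := by
          rw [entry10, hNcoe]
          have e1 : (!![(0 : ℤ), 1; -1, a / c]) 1 0 = -1 := by simp
          have e2 : (!![(0 : ℤ), 1; -1, a / c]) 1 1 = a / c := by simp
          have e3 : (A'.1) 0 0 = a := by simp [hA']
          have e4 : (A'.1) 1 0 = c := by simp [hA']
          rw [e1, e2, e3, e4, Int.emod_def]
          ring
        have hlt : (((N * A').1) 1 0).natAbs < n := by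
          rw [hentry]
          rw [Int.natAbs_neg]
          rw [← hc']
          exact natAbs_emod_lt h0
        have hNA : N * A' ∈ Esub ℤ := ih _ hlt (N * A') rfl
        have hNmem : N ∈ Esub ℤ := Subgroup.mul_mem _ wSL_mem (elUp_mem _)
        have heq : A' = N⁻¹ * (N * A') := by group
        rw [heq]
        exact Subgroup.mul_mem _ (Subgroup.inv_mem _ hNmem) hNA

end Paper
namespace Paper

variable {R S : Type} [CommRing R] [CommRing S]

lemma map_coe (f : R →+* S) (A : SL(2, R)) :
    ((Matrix.SpecialLinearGroup.map f A) : Matrix (Fin 2) (Fin 2) S) = A.1.map f := rfl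

lemma map_entry (f : R →+* S) (A : SL(2, R)) (i j : Fin 2) :
    (Matrix.SpecialLinearGroup.map f A).1 i j = f (A.1 i j) := by
  rw [map_coe, Matrix.map_apply]

lemma map_elUp (f : R →+* S) (r : R) :
    Matrix.SpecialLinearGroup.map f (elUp R r) = elUp S (f r) := by
  apply Subtype.ext
  rw [map_coe]
  show (!![1, r; 0, 1] : Matrix (Fin 2) (Fin 2) R).map f = !![1, f r; 0, 1]
  ext i j
  fin_cases i <;> fin_cases j <;> simp [Matrix.map_apply]

lemma map_elLow (f : R →+* S) (r : R) :
    Matrix.SpecialLinearGroup.map f (elLow R r) = elLow S (f r) := by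
  apply Subtype.ext
  rw [map_coe]
  show (!![1, 0; r, 1] : Matrix (Fin 2) (Fin 2) R).map f = !![1, 0; f r, 1]
  ext i j
  fin_cases i <;> fin_cases j <;> simp [Matrix.map_apply]

lemma map_Esub_le (f : R →+* S) :
    (Esub R).map (Matrix.SpecialLinearGroup.map f) ≤ Esub S := by
  rw [Esub, MonoidHom.map_closure]
  rw [Subgroup.closure_le]
  rintro _ ⟨A, hA, rfl⟩
  rcases hA with ⟨r, rfl⟩ | ⟨r, rfl⟩
  · rw [map_elUp]; exact elUp_mem _
  · rw [map_elLow]; exact elLow_mem _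

lemma elUp_zero : elUp R 0 = 1 := by
  apply Subtype.ext
  show !![1, (0 : R); 0, 1] = 1
  rw [← Matrix.one_fin_two]

/-- The upper triangular subgroup of `SL₂(ℤ[t])` is contained in `E₂(ℤ[t])`. -/
lemma Bsub_polyZ_le_Esub : Bsub (Polynomial ℤ) ≤ Esub (Polynomial ℤ) := by
  intro A hA
  have h10 : A.1 1 0 = 0 := hA
  have hdet : A.1 0 0 * A.1 1 1 = 1 := by
    have h := A.2
    rw [Matrix.det_fin_two, h10, mul_zero, sub_zero] at h
    exact h
  obtain ⟨u, hu1, hu2⟩ := Polynomial.isUnit_iff.mp (IsUnit.of_mul_eq_one _ hdet)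
  rcases Int.isUnit_iff.mp hu1 with h1 | h1
  · -- a = 1
    have h00 : A.1 0 0 = 1 := by rw [← hu2, h1]; simp
    have h11 : A.1 1 1 = 1 := by rw [h00, one_mul] at hdet; exact hdet
    have : A = elUp (Polynomial ℤ) (A.1 0 1) := by
      apply Subtype.ext
      show A.1 = !![1, A.1 0 1; 0, 1]
      conv_lhs => rw [Matrix.eta_fin_two A.1]
      rw [h00, h10, h11]
    rw [this]
    exact elUp_mem _
  · -- a = -1
    have h00 : A.1 0 0 = -1 := by rw [← hu2, h1]; simp
    have h11 : A.1 1 1 = -1 := by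
      have := hdet
      rw [h00] at this
      linear_combination -this
    have : A = negI (Polynomial ℤ) * elUp (Polynomial ℤ) (-(A.1 0 1)) := by
      apply Subtype.ext
      show A.1 = (-1 : Matrix (Fin 2) (Fin 2) (Polynomial ℤ)) * !![1, -(A.1 0 1); 0, 1]
      rw [neg_one_mul]
      conv_lhs => rw [Matrix.eta_fin_two A.1]
      rw [h00, h10, h11]
      ext i j
      fin_cases i <;> fin_cases j <;> simp
    rw [this]
    exact Subgroup.mul_mem _ negI_mem (elUp_mem _)

/-- The inclusion `SL₂(ℤ) ↪ E₂(ℤ[t])` induced by constant polynomials. -/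
noncomputable def SLZtoE : SL(2, ℤ) →* ↥(Esub (Polynomial ℤ)) :=
  (Matrix.SpecialLinearGroup.map (Polynomial.C : ℤ →+* Polynomial ℤ)).codRestrict
    (Esub (Polynomial ℤ))
    (fun A => map_Esub_le _ ⟨A, SL2Z_mem_Esub A, rfl⟩)

/-- The inclusion `B(ℤ) ↪ B(ℤ[t])` induced by constant polynomials. -/
noncomputable def BZtoBZX : ↥(Bsub ℤ) →* ↥(Bsub (Polynomial ℤ)) :=
  ((Matrix.SpecialLinearGroup.map (Polynomial.C : ℤ →+* Polynomial ℤ)).comp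
      (Bsub ℤ).subtype).codRestrict (Bsub (Polynomial ℤ))
    (fun A => by
      show (Matrix.SpecialLinearGroup.map (Polynomial.C : ℤ →+* Polynomial ℤ) A.1).1 1 0 = 0
      rw [map_entry]
      have h : A.1.1 1 0 = 0 := A.2
      rw [h, map_zero])

/-- The inclusion `B(ℤ[t]) ↪ E₂(ℤ[t])`. -/
noncomputable def BZXtoE : ↥(Bsub (Polynomial ℤ)) →* ↥(Esub (Polynomial ℤ)) :=
  Subgroup.inclusion Bsub_polyZ_le_Esub

end Paper
namespace Paper

/-- The subgroup `C` of matrices `(1, t·p; 0, 1)`. -/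
noncomputable def Csub : Subgroup SL(2, Polynomial (ZMod 2)) where
  carrier := {A | ∃ p : Polynomial (ZMod 2), A = elUp (Polynomial (ZMod 2)) (X * p)}
  one_mem' := ⟨0, by rw [mul_zero, elUp_zero]⟩
  mul_mem' := by
    rintro A B ⟨p, rfl⟩ ⟨q, rfl⟩
    exact ⟨p + q, by rw [elUp_mul, mul_add]⟩
  inv_mem' := by
    rintro A ⟨p, rfl⟩
    refine ⟨-p, ?_⟩
    have : elUp (Polynomial (ZMod 2)) (X * p) * elUp (Polynomial (ZMod 2)) (X * -p) = 1 := by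
      rw [elUp_mul, ← mul_add, add_neg_cancel, mul_zero, elUp_zero]
    rw [inv_eq_of_mul_eq_one_right this]

/-- The congruence subgroup `K(𝔽₂)` of matrices congruent to the identity modulo `t`,
i.e. the kernel of reduction modulo `t`. -/
noncomputable def Ksub : Subgroup SL(2, Polynomial (ZMod 2)) :=
  MonoidHom.ker (Matrix.SpecialLinearGroup.map
    (Polynomial.constantCoeff : Polynomial (ZMod 2) →+* ZMod 2))

/-- The matrices `m(0) = 1`, `m(1) = (1 0; 1 1)`, `m(∞) = (0 1; 1 0)`. -/
noncomputable def mmat : Fin 3 → SL(2, Polynomial (ZMod 2))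
  | 0 => 1
  | 1 => elLow (Polynomial (ZMod 2)) 1
  | 2 => ⟨!![0, 1; 1, 0], by
      rw [Matrix.det_fin_two_of]
      have h2 : (1 : Polynomial (ZMod 2)) + 1 = 0 := by
        rw [← Polynomial.C_1, ← Polynomial.C_add]
        rw [show (1 : ZMod 2) + 1 = 0 from by decide, Polynomial.C_0]
      linear_combination -h2⟩

/-- The conjugate subgroups `m(s)·C·m(s)⁻¹`. -/
noncomputable def conjC (i : Fin 3) : Subgroup SL(2, Polynomial (ZMod 2)) :=
  Csub.map (MulAut.conj (mmat i)).toMonoidHom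

lemma Csub_le_Ksub : Csub ≤ Ksub := by
  rintro _ ⟨p, rfl⟩
  show Matrix.SpecialLinearGroup.map _ (elUp (Polynomial (ZMod 2)) (X * p)) = 1
  rw [map_elUp]
  have : Polynomial.constantCoeff (X * p) = 0 := by
    rw [_root_.map_mul]
    rw [show Polynomial.constantCoeff (X : Polynomial (ZMod 2)) = 0 from Polynomial.coeff_X_zero]
    rw [zero_mul]
  rw [this, elUp_zero]

lemma conjC_le_Ksub (i : Fin 3) : conjC i ≤ Ksub := by
  rintro _ ⟨A, hA, rfl⟩
  exact (MonoidHom.normal_ker _).conj_mem _ (Csub_le_Ksub hA) _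

end Paper

/-!
`SL₂(𝔽₂[t])` acts on `𝔽₂[t]²`. A nonzero vector `v` has a leading direction
`lim_{t → ∞} [v₀ : v₁] = [1 : s]`, `s ∈ ℙ¹(𝔽₂) = {0, 1, ∞}`, and the vectors of direction `s` are
`m(s) • D` with `D = {v | deg v₁ < deg v₀}`. A nontrivial `(1, tp; 0, 1)` sends every nonzero
`v ∉ D` into `D`, so a nontrivial element of `m(s)·C·m(s)⁻¹` sends the vectors of the two other
directions to direction `s`, and the ping-pong lemma gives injectivity.

For surjectivity let `v` be the first column of `A ∈ K(𝔽₂)`, of direction `s`. Dividing the first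
coordinate of `m(s)⁻¹ • v` by the second, with a quotient divisible by `t`, yields an element of
`m(s)·C·m(s)⁻¹` lowering `max (deg v₀) (deg v₁)`, a quantity invariant under constant matrices.
When it reaches `0`, `A` is upper unitriangular and lies in `C`.
-/

namespace Paper

open scoped Pointwise Function

lemma exists_degree_add_X_mul_mul_le {K : Type*} [Field K] (a : K[X]) {d : K[X]} (hd : d ≠ 0) :
    ∃ q : K[X], (a + X * q * d).degree ≤ d.degree := by
  refine ⟨-(a / d).divX, ?_⟩
  have hsplit : a + X * -(a / d).divX * d = a % d + Polynomial.C ((a / d).coeff 0) * d := by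
    linear_combination (-1 : K[X]) * EuclideanDomain.div_add_mod a d - d * divX_mul_X_add (a / d)
  rw [hsplit, ← Polynomial.smul_eq_C_mul]
  exact (degree_add_le _ _).trans (max_le (degree_mod_lt a hd).le (degree_smul_le _ _))

section Vectors

variable {R : Type} [CommRing R]

lemma SL2_smul_apply (A : SL(2, R)) (v : Fin 2 → R) (k : Fin 2) :
    (A • v) k = A.1 k 0 * v 0 + A.1 k 1 * v 1 := by
  change (A.1 *ᵥ v) k = _
  simp [mulVec, dotProduct, Fin.sum_univ_two]

lemma elUp_smul (r : R) (v : Fin 2 → R) :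
    elUp R r • v = ![v 0 + r * v 1, v 1] := by
  ext k
  rw [SL2_smul_apply]
  fin_cases k <;> simp [elUp]

lemma isCoprime_SL2_smul {v : Fin 2 → R} (hv : IsCoprime (v 0) (v 1)) (A : SL(2, R)) :
    IsCoprime ((A • v) 0) ((A • v) 1) :=
  hv.mulVecSL A

def vecNatDegree (v : Fin 2 → R[X]) : ℕ := max (v 0).natDegree (v 1).natDegree

lemma vecNatDegree_map_C_smul_le (m : SL(2, R)) (v : Fin 2 → R[X]) :
    vecNatDegree (SpecialLinearGroup.map Polynomial.C m • v) ≤ vecNatDegree v := by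
  have key (k : Fin 2) :
      ((SpecialLinearGroup.map Polynomial.C m • v) k).natDegree ≤ vecNatDegree v := by
    rw [SL2_smul_apply, map_entry, map_entry]
    exact (natDegree_add_le _ _).trans
      (max_le_max (natDegree_C_mul_le _ _) (natDegree_C_mul_le _ _))
  exact max_le (key 0) (key 1)

lemma vecNatDegree_map_C_smul (m : SL(2, R)) (v : Fin 2 → R[X]) :
    vecNatDegree (SpecialLinearGroup.map Polynomial.C m • v) = vecNatDegree v := by
  refine (vecNatDegree_map_C_smul_le m v).antisymm ?_
  calc vecNatDegree v
      = vecNatDegree (SpecialLinearGroup.map Polynomial.C m⁻¹ •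
          SpecialLinearGroup.map Polynomial.C m • v) := by rw [smul_smul, ← map_mul]; simp
    _ ≤ _ := vecNatDegree_map_C_smul_le _ _

def firstDominant : Set (Fin 2 → R[X]) := {v | (v 1).degree < (v 0).degree}

lemma degree_lt_degree_X_mul_mul [NoZeroDivisors R] {p q : R[X]} (hp : p ≠ 0) (hq : q ≠ 0) :
    q.degree < (X * p * q).degree :=
  calc q.degree ≤ (q * p).degree := degree_le_mul_left q hp
    _ < (q * p * X).degree := degree_lt_degree_mul_X (mul_ne_zero hq hp)
    _ = (X * p * q).degree := by ring_nf

lemma elUp_X_mul_smul_mem_firstDominant [NoZeroDivisors R] {p : R[X]} (hp : p ≠ 0)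
    {v : Fin 2 → R[X]} (hvD : v ∉ firstDominant) (hv : v ≠ 0) :
    elUp R[X] (X * p) • v ∈ firstDominant := by
  simp only [firstDominant, Set.mem_ofPred_eq, not_lt] at hvD ⊢
  have hv1 : v 1 ≠ 0 := by
    intro h1
    rw [h1, Polynomial.degree_zero, le_bot_iff, degree_eq_bot] at hvD
    exact hv (funext (Fin.forall_fin_two.2 ⟨hvD, h1⟩))
  have hlt := degree_lt_degree_X_mul_mul hp hv1
  rw [elUp_smul]
  simp only [Matrix.cons_val_zero, Matrix.cons_val_one]
  rwa [degree_add_eq_right_of_degree_lt (hvD.trans_lt hlt)]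

end Vectors

lemma degree_add_lt_of_degree_eq {p q : (ZMod 2)[X]} (hp : p ≠ 0) (h : p.degree = q.degree) :
    (p + q).degree < p.degree := by
  have hq : q ≠ 0 := by rintro rfl; exact hp (degree_eq_bot.mp h)
  have monic (r : (ZMod 2)[X]) (hr : r ≠ 0) : r.leadingCoeff = 1 := by
    have : ∀ c : ZMod 2, c ≠ 0 → c = 1 := by decide
    exact this _ (leadingCoeff_ne_zero.mpr hr)
  rw [← CharTwo.sub_eq_add]
  exact degree_sub_lt_left h hp (by rw [monic p hp, monic q hq])

lemma mmat_zero_smul (v : Fin 2 → (ZMod 2)[X]) : mmat 0 • v = v := one_smul _ v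

lemma mmat_one_smul (v : Fin 2 → (ZMod 2)[X]) : mmat 1 • v = ![v 0, v 0 + v 1] := by
  ext k
  rw [SL2_smul_apply]
  fin_cases k <;> simp [mmat, elLow]

lemma mmat_two_smul (v : Fin 2 → (ZMod 2)[X]) : mmat 2 • v = ![v 1, v 0] := by
  ext k
  rw [SL2_smul_apply]
  fin_cases k <;> simp [mmat]

lemma mmat_smul_mmat_smul (i : Fin 3) (v : Fin 2 → (ZMod 2)[X]) : mmat i • mmat i • v = v := by
  fin_cases i
  · exact (mmat_zero_smul _).trans (mmat_zero_smul v)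
  · ext k
    fin_cases k <;> simp [mmat_one_smul, ← add_assoc, CharTwo.add_self_eq_zero]
  · ext k
    fin_cases k <;> simp [mmat_two_smul]

lemma exists_map_C_eq_mmat (i : Fin 3) :
    ∃ m : SL(2, ZMod 2), SpecialLinearGroup.map Polynomial.C m = mmat i := by
  fin_cases i
  · exact ⟨1, map_one _⟩
  · exact ⟨elLow (ZMod 2) 1, by rw [map_elLow, map_one]; rfl⟩
  · refine ⟨⟨!![0, 1; 1, 0], by simp [det_fin_two_of]⟩, Subtype.ext (Matrix.ext fun k l => ?_)⟩
    change Polynomial.C (!![0, 1; 1, 0] k l) = _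
    fin_cases k <;> fin_cases l <;> simp [mmat]

lemma vecNatDegree_mmat_smul (i : Fin 3) (v : Fin 2 → (ZMod 2)[X]) :
    vecNatDegree (mmat i • v) = vecNatDegree v := by
  obtain ⟨m, hm⟩ := exists_map_C_eq_mmat i
  rw [← hm, vecNatDegree_map_C_smul]

def pingPongSet (i : Fin 3) : Set (Fin 2 → (ZMod 2)[X]) := mmat i • firstDominant

lemma mem_pingPongSet_iff {i : Fin 3} {v : Fin 2 → (ZMod 2)[X]} :
    v ∈ pingPongSet i ↔ mmat i • v ∈ firstDominant := by
  constructor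
  · rintro ⟨w, hw, rfl⟩
    rwa [mmat_smul_mmat_smul]
  · exact fun h => ⟨_, h, mmat_smul_mmat_smul i v⟩

lemma mem_pingPongSet_zero {v : Fin 2 → (ZMod 2)[X]} :
    v ∈ pingPongSet 0 ↔ (v 1).degree < (v 0).degree := by
  rw [mem_pingPongSet_iff, mmat_zero_smul]; rfl

lemma mem_pingPongSet_one {v : Fin 2 → (ZMod 2)[X]} :
    v ∈ pingPongSet 1 ↔ (v 0 + v 1).degree < (v 0).degree := by
  rw [mem_pingPongSet_iff, mmat_one_smul]; rfl

lemma mem_pingPongSet_two {v : Fin 2 → (ZMod 2)[X]} :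
    v ∈ pingPongSet 2 ↔ (v 0).degree < (v 1).degree := by
  rw [mem_pingPongSet_iff, mmat_two_smul]; rfl

lemma zero_notMem_pingPongSet (i : Fin 3) : (0 : Fin 2 → (ZMod 2)[X]) ∉ pingPongSet i := by
  simp [mem_pingPongSet_iff, firstDominant]

lemma pingPongSet_nonempty (i : Fin 3) : (pingPongSet i).Nonempty :=
  ⟨mmat i • ![1, 0], Set.smul_mem_smul_set (by simp [firstDominant])⟩

lemma pairwise_disjoint_pingPongSet : Pairwise (Disjoint on pingPongSet) := by
  rw [pairwise_disjoint_on]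
  intro i j hij
  rw [Set.disjoint_left]
  intro v hi hj
  fin_cases i <;> fin_cases j <;> simp at hij <;>
    simp only [Fin.zero_eta, Fin.isValue, Fin.mk_one, Fin.reduceFinMk,
      mem_pingPongSet_zero, mem_pingPongSet_one, mem_pingPongSet_two] at hi hj
  · rw [degree_add_eq_left_of_degree_lt hi] at hj
    exact lt_irrefl _ hj
  · exact lt_asymm hi hj
  · rw [degree_add_eq_right_of_degree_lt hj] at hi
    exact lt_asymm hi hj

lemma exists_mem_pingPongSet {v : Fin 2 → (ZMod 2)[X]} (hv : v ≠ 0) :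
    ∃ i, v ∈ pingPongSet i := by
  rcases lt_trichotomy (v 1).degree (v 0).degree with h | h | h
  · exact ⟨0, mem_pingPongSet_zero.mpr h⟩
  · have hv0 : v 0 ≠ 0 := by
      intro h0
      rw [h0, Polynomial.degree_zero, degree_eq_bot] at h
      exact hv (funext (Fin.forall_fin_two.2 ⟨h0, h⟩))
    exact ⟨1, mem_pingPongSet_one.mpr (degree_add_lt_of_degree_eq hv0 h.symm)⟩
  · exact ⟨2, mem_pingPongSet_two.mpr h⟩

noncomputable def coprodToKsub : Monoid.CoprodI (fun i => ↥(conjC i)) →* ↥Ksub :=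
  Monoid.CoprodI.lift fun i => Subgroup.inclusion (conjC_le_Ksub i)

lemma smul_pingPongSet_subset {i j : Fin 3} (hij : i ≠ j) (h : ↥(conjC i)) (hh : h ≠ 1) :
    (h : SL(2, (ZMod 2)[X])) • pingPongSet j ⊆ pingPongSet i := by
  obtain ⟨_, _, ⟨p, rfl⟩, rfl⟩ := h
  have hp : p ≠ 0 := by
    rintro rfl
    exact hh (Subtype.ext (by simp [elUp_zero]))
  rintro _ ⟨v, hv, rfl⟩
  have hvi : v ∉ pingPongSet i := Set.disjoint_left.mp (pairwise_disjoint_pingPongSet hij.symm) hv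
  have hv0 : v ≠ 0 := by rintro rfl; exact zero_notMem_pingPongSet j hv
  rw [pingPongSet, Set.mem_smul_set_iff_inv_smul_mem] at hvi ⊢
  simp only [MulEquiv.coe_toMonoidHom, MulAut.conj_apply, smul_smul, ← mul_assoc,
    inv_mul_cancel, one_mul]
  rw [mul_smul]
  exact elUp_X_mul_smul_mem_firstDominant hp hvi ((smul_eq_zero_iff_eq _).not.mpr hv0)

lemma coprodToKsub_injective : Function.Injective coprodToKsub :=
  Monoid.CoprodI.lift_injective_of_ping_pong _ (Or.inl (by simp)) pingPongSet
    pingPongSet_nonempty pairwise_disjoint_pingPongSet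
    fun _ _ hij h hh => smul_pingPongSet_subset hij h hh

lemma coeff_zero_of_mem_Ksub {A : SL(2, (ZMod 2)[X])} (hA : A ∈ Ksub) (k l : Fin 2) :
    (A.1 k l).coeff 0 = (1 : Matrix (Fin 2) (Fin 2) (ZMod 2)) k l := by
  have := congrArg (fun M : SL(2, ZMod 2) => M.1 k l) (MonoidHom.mem_ker.mp hA)
  simpa [map_entry] using this

lemma conjC_zero : conjC 0 = Csub := by
  ext A
  simp [conjC, mmat]

lemma mem_Csub_of_vecNatDegree_eq_zero {A : SL(2, (ZMod 2)[X])} (hA : A ∈ Ksub)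
    (h0 : vecNatDegree (A • (Pi.single 0 1 : Fin 2 → (ZMod 2)[X])) = 0) : A ∈ Csub := by
  have hcol : (A.1 0 0).natDegree = 0 ∧ (A.1 1 0).natDegree = 0 := by
    simpa [vecNatDegree, SL2_smul_apply] using h0
  have ha : A.1 0 0 = 1 := by
    rw [eq_C_of_natDegree_eq_zero hcol.1, coeff_zero_of_mem_Ksub hA]; simp
  have hc : A.1 1 0 = 0 := by
    rw [eq_C_of_natDegree_eq_zero hcol.2, coeff_zero_of_mem_Ksub hA]; simp
  have hd : A.1 1 1 = 1 := by
    have hdet := A.2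
    rw [det_fin_two, ha, hc] at hdet
    simpa using hdet
  have hb : X ∣ A.1 0 1 := X_dvd_iff.mpr (by simp [coeff_zero_of_mem_Ksub hA])
  refine ⟨(A.1 0 1).divX, Subtype.ext (Matrix.ext fun k l => ?_)⟩
  rw [X_mul_divX hb]
  fin_cases k <;> fin_cases l <;> simp [elUp, ha, hc, hd]

lemma exists_vecNatDegree_smul_lt {v : Fin 2 → (ZMod 2)[X]} (hv : IsCoprime (v 0) (v 1))
    (hpos : 0 < vecNatDegree v) :
    ∃ i, ∃ g ∈ conjC i, vecNatDegree (g • v) < vecNatDegree v := by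
  have hv0 : v ≠ 0 := by rintro rfl; simp [vecNatDegree] at hpos
  obtain ⟨i, w, hw, rfl⟩ := exists_mem_pingPongSet hv0
  rw [vecNatDegree_mmat_smul] at hpos ⊢
  have hw1 : w 1 ≠ 0 := by
    intro h1
    have hcop : IsCoprime (w 0) (w 1) := by
      simpa [smul_smul] using isCoprime_SL2_smul hv (mmat i)⁻¹
    rw [h1, isCoprime_zero_right] at hcop
    simp [vecNatDegree, h1, natDegree_eq_zero_of_isUnit hcop] at hpos
  obtain ⟨q, hq⟩ := exists_degree_add_X_mul_mul_le (w 0) hw1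
  have hc : elUp _ (X * q) ∈ Csub := ⟨q, rfl⟩
  refine ⟨i, mmat i * elUp _ (X * q) * (mmat i)⁻¹, Subgroup.mem_map_of_mem _ hc, ?_⟩
  rw [mul_smul, mul_smul, inv_smul_smul, vecNatDegree_mmat_smul, elUp_smul]
  have hw : (w 1).natDegree < (w 0).natDegree := natDegree_lt_natDegree hw1 hw
  have hq' : (w 0 + X * q * w 1).natDegree ≤ (w 1).natDegree := natDegree_le_natDegree hq
  simp only [vecNatDegree, Matrix.cons_val_zero, Matrix.cons_val_one] at hpos ⊢
  omega

lemma coprodToKsub_surjective : Function.Surjective coprodToKsub := by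
  rintro ⟨A, hA⟩
  obtain ⟨n, hn⟩ : ∃ n, vecNatDegree (A • (Pi.single 0 1 : Fin 2 → (ZMod 2)[X])) = n := ⟨_, rfl⟩
  induction n using Nat.strong_induction_on generalizing A with
  | _ n ih =>
    rcases n.eq_zero_or_pos with rfl | hpos
    · have hC : A ∈ conjC 0 := conjC_zero ▸ mem_Csub_of_vecNatDegree_eq_zero hA hn
      exact ⟨Monoid.CoprodI.of ⟨A, hC⟩, Monoid.CoprodI.lift_of _ _⟩
    · obtain ⟨i, g, hg, hlt⟩ := exists_vecNatDegree_smul_lt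
        (isCoprime_SL2_smul (by simpa using isCoprime_one_left) A) (hn ▸ hpos)
      obtain ⟨B, hB⟩ := ih _ (hn ▸ hlt) (g * A) (mul_mem (conjC_le_Ksub i hg) hA)
        (by rw [mul_smul])
      refine ⟨(Monoid.CoprodI.of ⟨g, hg⟩)⁻¹ * B, ?_⟩
      rw [map_mul, map_inv, hB, coprodToKsub, Monoid.CoprodI.lift_of]
      ext1
      simp

end Paper

open Paper in
/-- `K(𝔽₂)`, the subgroup of matrices of `SL₂(𝔽₂[t])` congruent to the identity modulo `t`,
is the free product of the three subgroups `m(s)·C·m(s)⁻¹`, `s ∈ ℙ¹(𝔽₂) = {0, 1, ∞}`: the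
natural homomorphism from their free product, induced by the inclusions, is an isomorphism. -/
theorem free_product_congruence_subgroup :
    Function.Bijective
      (Monoid.CoprodI.lift (fun i : Fin 3 =>
        ((Subgroup.inclusion (conjC_le_Ksub i)) : ↥(conjC i) →* ↥Ksub))) :=
  ⟨coprodToKsub_injective, coprodToKsub_surjective⟩
end
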